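/- arXiv:2501.07756 — 6 statements merged into one kernel-verified Lean document; each statement's English description precedes it below -/
import Mathlib

section
/- For every θ ∈ ℝ, the operator 𝒰_θ is unitary, commutes with M_g for every bounded g : ℕ → ℂ, and satisfies 𝒰_θ U 𝒰_θ* = e^{2πiθ}·U, 𝒰_θ V 𝒰_θ* = e^{2πiθ}·V, 𝒰_θ S 𝒰_θ* = e^{2πiθ}·S, and 𝒰_θ W 𝒰_θ* = e^{2πiθ}·W. (Thus conjugation by 𝒰_θ implements a gauge action on each shift algebra.) -/
/- Fix an integer `s ≥ 2`.  `Vtx s = Σ n, Fin (s^n)`, `Hsp s = ℓ²(Vtx s, ℂ)` with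
canonical orthonormal basis `Evec s v = lp.single 2 v 1`.  The four shifts
(Bunce–Deddens `U`, Hensel `V`, Bernoulli `S`, Serre `W`) and the gauge unitary
`𝒰_θ E_{(n,x)} = e^{2πinθ} E_{(n,x)}` are encoded by their action on the basis. -/

noncomputable section

abbrev Vtx (s : ℕ) := Σ n : ℕ, Fin (s ^ n)

abbrev Hsp (s : ℕ) := lp (fun _ : Vtx s => ℂ) 2

def Evec (s : ℕ) (v : Vtx s) : Hsp s := lp.single 2 v 1

def idxU (s n : ℕ) (hs : 2 ≤ s) (x : Fin (s ^ n)) : Fin (s ^ (n + 1)) :=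
  ⟨(x : ℕ) + 1, by
    have hx := x.2
    have h : s ^ n < s ^ (n + 1) := Nat.pow_lt_pow_succ (by omega)
    omega⟩

def idxV (s n : ℕ) (hs : 2 ≤ s) (x : Fin (s ^ n)) : Fin (s ^ (n + 1)) :=
  ⟨s * (x : ℕ), by
    have hx := x.2
    have h1 : s * (x : ℕ) < s * s ^ n := mul_lt_mul_of_pos_left hx (by omega)
    have h2 : s ^ (n + 1) = s * s ^ n := by rw [pow_succ]; ring
    omega⟩

def idxS (s n : ℕ) (x : Fin (s ^ n)) (j : Fin s) : Fin (s ^ (n + 1)) :=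
  ⟨s * (x : ℕ) + (j : ℕ), by
    have hx := x.2
    have hj := j.2
    have h1 : s * ((x : ℕ) + 1) ≤ s * s ^ n := Nat.mul_le_mul (le_refl s) (by omega)
    have h2 : s * ((x : ℕ) + 1) = s * (x : ℕ) + s := by ring
    have h3 : s ^ (n + 1) = s * s ^ n := by rw [pow_succ]; ring
    omega⟩

def idxW (s n : ℕ) (x : Fin (s ^ n)) (j : Fin s) : Fin (s ^ (n + 1)) :=
  ⟨(x : ℕ) + (j : ℕ) * s ^ n, by
    have hx := x.2
    have hj := j.2
    have h1 : (j : ℕ) * s ^ n ≤ (s - 1) * s ^ n :=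
      Nat.mul_le_mul (by omega) (le_refl (s ^ n))
    have h2 : (s - 1) * s ^ n = s * s ^ n - s ^ n := by rw [Nat.sub_one_mul]
    have h3 : s ^ n ≤ s * s ^ n := Nat.le_mul_of_pos_left _ (by omega)
    have h4 : s ^ (n + 1) = s * s ^ n := by rw [pow_succ]; ring
    omega⟩

/-! `𝒰_θ` is diagonal in the canonical basis, with unimodular eigenvalue `e^{2πinθ}` on level `n`;
this gives unitarity and commutation with the diagonal operators `M_g`. Each shift maps level `n`
into level `n + 1`, where `𝒰_θ` acts as `e^{2πiθ}` times its eigenvalue on level `n`, so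
`𝒰_θ T 𝒰_θ* = e^{2πiθ} T` holds on every basis vector. -/

open ContinuousLinearMap
open scoped ComplexConjugate ENNReal

namespace lp

variable {ι 𝕜 : Type*} [DecidableEq ι]

section NormedField

variable [NormedField 𝕜] {p : ℝ≥0∞} [Fact (1 ≤ p)]

theorem continuousLinearMap_ext_single {F : Type*} [NormedAddCommGroup F] [NormedSpace 𝕜 F]
    (hp : p ≠ ∞) {T T' : lp (fun _ : ι => 𝕜) p →L[𝕜] F}
    (h : ∀ i, T (lp.single p i 1) = T' (lp.single p i 1)) : T = T' := by
  ext f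
  have hf := lp.hasSum_single hp f
  have hsingle : ∀ i, lp.single (E := fun _ : ι => 𝕜) p i (f i) = f i • lp.single p i 1 :=
    fun i => by rw [← lp.single_smul, smul_eq_mul, mul_one]
  refine (hf.mapL T).unique ?_
  simpa only [hsingle, map_smul, h] using hf.mapL T'

theorem commute_of_diagonal (hp : p ≠ ∞)
    {A B : lp (fun _ : ι => 𝕜) p →L[𝕜] lp (fun _ : ι => 𝕜) p} {a b : ι → 𝕜}
    (hA : ∀ i, A (lp.single p i 1) = a i • lp.single p i 1)
    (hB : ∀ i, B (lp.single p i 1) = b i • lp.single p i 1) : Commute A B :=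
  continuousLinearMap_ext_single hp fun i => by
    rw [mul_apply_eq_comp, mul_apply_eq_comp, hA, hB, map_smul, map_smul, hA, hB, smul_smul,
      smul_smul, mul_comm]

end NormedField

section RCLike

variable [RCLike 𝕜] {A : lp (fun _ : ι => 𝕜) 2 →L[𝕜] lp (fun _ : ι => 𝕜) 2} {d : ι → 𝕜}

theorem adjoint_apply_single_of_diagonal
    (hA : ∀ i, A (lp.single 2 i 1) = d i • lp.single 2 i 1) (i : ι) :
    adjoint A (lp.single 2 i 1) = conj (d i) • lp.single 2 i 1 := by
  ext j
  have hcoord : ∀ y : lp (fun _ : ι => 𝕜) 2, y j = inner 𝕜 (lp.single 2 j (1 : 𝕜)) y := by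
    intro y; simp [lp.inner_single_left]
  rw [hcoord, adjoint_inner_right, hA, inner_smul_left, ← hcoord]
  rcases eq_or_ne j i with rfl | hji
  · rfl
  · simp [Pi.single_eq_of_ne hji]

theorem mem_unitary_of_diagonal
    (hA : ∀ i, A (lp.single 2 i 1) = d i • lp.single 2 i 1) (hd : ∀ i, ‖d i‖ = 1) :
    A ∈ unitary (lp (fun _ : ι => 𝕜) 2 →L[𝕜] lp (fun _ : ι => 𝕜) 2) := by
  have hconj : ∀ i, conj (d i) * d i = 1 := fun i => by
    rw [RCLike.conj_mul, hd, RCLike.ofReal_one, one_pow]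
  rw [Unitary.mem_iff, star_eq_adjoint]
  constructor <;> refine continuousLinearMap_ext_single ENNReal.ofNat_ne_top fun i => ?_ <;>
    simp only [mul_apply_eq_comp, one_apply_eq_self, hA, adjoint_apply_single_of_diagonal hA,
      map_smul, smul_smul, hconj, mul_comm (d i), one_smul]

theorem mul_mul_adjoint_eq_smul_of_diagonal
    (hA : ∀ i, A (lp.single 2 i 1) = d i • lp.single 2 i 1) (hd : ∀ i, ‖d i‖ = 1)
    {T : lp (fun _ : ι => 𝕜) 2 →L[𝕜] lp (fun _ : ι => 𝕜) 2} {c : 𝕜}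
    (hT : ∀ i, T (lp.single 2 i 1) ∈ Module.End.eigenspace (A : _ →ₗ[𝕜] _) (c * d i)) :
    A * T * adjoint A = c • T := by
  refine continuousLinearMap_ext_single ENNReal.ofNat_ne_top fun i => ?_
  have hTi : A (T (lp.single 2 i 1)) = (c * d i) • T (lp.single 2 i 1) :=
    Module.End.mem_eigenspace_iff.1 (hT i)
  rw [mul_apply_eq_comp, mul_apply_eq_comp, adjoint_apply_single_of_diagonal hA, map_smul,
    map_smul, hTi, smul_smul, smul_apply]
  congr 1
  rw [mul_left_comm, RCLike.conj_mul, hd, RCLike.ofReal_one, one_pow, mul_one]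

end RCLike

end lp

def gaugePhase (θ : ℝ) (n : ℕ) : ℂ :=
  Complex.exp (2 * Real.pi * Complex.I * (n : ℂ) * (θ : ℂ))

theorem norm_gaugePhase (θ : ℝ) (n : ℕ) : ‖gaugePhase θ n‖ = 1 := by
  rw [gaugePhase, Complex.norm_exp]
  simp

theorem gaugePhase_succ (θ : ℝ) (n : ℕ) :
    gaugePhase θ (n + 1) = Complex.exp (2 * Real.pi * Complex.I * (θ : ℂ)) * gaugePhase θ n := by
  rw [gaugePhase, gaugePhase, ← Complex.exp_add]
  push_cast
  ring_nf

/-- For every `θ ∈ ℝ`, the gauge operator `𝒰_θ` is unitary, commutes with every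
diagonal operator `M_g` (for bounded `g : ℕ → ℂ`), and conjugation by `𝒰_θ`
multiplies each of the four shifts `U`, `V`, `S`, `W` by `e^{2πiθ}`. -/
theorem statement5 (s : ℕ) (hs : 2 ≤ s) (θ : ℝ)
    (U V S W 𝒰 : Hsp s →L[ℂ] Hsp s)
    (hU : ∀ (n : ℕ) (x : Fin (s ^ n)), U (Evec s ⟨n, x⟩) = Evec s ⟨n + 1, idxU s n hs x⟩)
    (hV : ∀ (n : ℕ) (x : Fin (s ^ n)), V (Evec s ⟨n, x⟩) = Evec s ⟨n + 1, idxV s n hs x⟩)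
    (hS : ∀ (n : ℕ) (x : Fin (s ^ n)),
      S (Evec s ⟨n, x⟩) = (1 / (s : ℂ)) • ∑ j : Fin s, Evec s ⟨n + 1, idxS s n x j⟩)
    (hW : ∀ (n : ℕ) (x : Fin (s ^ n)),
      W (Evec s ⟨n, x⟩) = (1 / (Real.sqrt s : ℂ)) • ∑ j : Fin s, Evec s ⟨n + 1, idxW s n x j⟩)
    (h𝒰 : ∀ (n : ℕ) (x : Fin (s ^ n)),
      𝒰 (Evec s ⟨n, x⟩)
        = Complex.exp (2 * Real.pi * Complex.I * (n : ℂ) * (θ : ℂ)) • Evec s ⟨n, x⟩) :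
    (ContinuousLinearMap.adjoint 𝒰 * 𝒰 = 1 ∧ 𝒰 * ContinuousLinearMap.adjoint 𝒰 = 1) ∧
    (∀ (g : ℕ → ℂ) (M : Hsp s →L[ℂ] Hsp s), (∃ C : ℝ, ∀ x : ℕ, ‖g x‖ ≤ C) →
      (∀ (n : ℕ) (x : Fin (s ^ n)), M (Evec s ⟨n, x⟩) = g (x : ℕ) • Evec s ⟨n, x⟩) →
      𝒰 * M = M * 𝒰) ∧
    𝒰 * U * ContinuousLinearMap.adjoint 𝒰
      = Complex.exp (2 * Real.pi * Complex.I * (θ : ℂ)) • U ∧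
    𝒰 * V * ContinuousLinearMap.adjoint 𝒰
      = Complex.exp (2 * Real.pi * Complex.I * (θ : ℂ)) • V ∧
    𝒰 * S * ContinuousLinearMap.adjoint 𝒰
      = Complex.exp (2 * Real.pi * Complex.I * (θ : ℂ)) • S ∧
    𝒰 * W * ContinuousLinearMap.adjoint 𝒰
      = Complex.exp (2 * Real.pi * Complex.I * (θ : ℂ)) • W := by
  set c := Complex.exp (2 * Real.pi * Complex.I * (θ : ℂ))
  have hdiag : ∀ v : Vtx s, 𝒰 (lp.single 2 v 1) = gaugePhase θ v.1 • lp.single 2 v 1 :=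
    fun ⟨n, x⟩ => h𝒰 n x
  have hlevel : ∀ n (y : Fin (s ^ (n + 1))),
      Evec s ⟨n + 1, y⟩ ∈ Module.End.eigenspace (𝒰 : Hsp s →ₗ[ℂ] Hsp s) (c * gaugePhase θ n) :=
    fun n y => gaugePhase_succ θ n ▸ Module.End.mem_eigenspace_iff.2 (h𝒰 (n + 1) y)
  have hconj_shift : ∀ T : Hsp s →L[ℂ] Hsp s,
      (∀ n x, T (Evec s ⟨n, x⟩) ∈ Module.End.eigenspace (𝒰 : Hsp s →ₗ[ℂ] Hsp s)
        (c * gaugePhase θ n)) → 𝒰 * T * adjoint 𝒰 = c • T :=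
    fun T hT => lp.mul_mul_adjoint_eq_smul_of_diagonal hdiag (fun _ => norm_gaugePhase θ _)
      fun ⟨n, x⟩ => hT n x
  refine ⟨Unitary.mem_iff.1 (lp.mem_unitary_of_diagonal hdiag fun _ => norm_gaugePhase θ _),
    fun g M _ hM => (lp.commute_of_diagonal (b := fun v : Vtx s => g v.2) ENNReal.ofNat_ne_top
      hdiag fun ⟨n, x⟩ => hM n x).eq,
    hconj_shift U fun n x => ?_, hconj_shift V fun n x => ?_, hconj_shift S fun n x => ?_,
    hconj_shift W fun n x => ?_⟩
  · exact hU n x ▸ hlevel n _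
  · exact hV n x ▸ hlevel n _
  · rw [hS]
    exact Submodule.smul_mem _ _ (Submodule.sum_mem _ fun _ _ => hlevel n _)
  · rw [hW]
    exact Submodule.smul_mem _ _ (Submodule.sum_mem _ fun _ _ => hlevel n _)
end
end

section
/- Let A be a unital C*-algebra, J ∈ A with J*J = 1, and B a unital C*-subalgebra of A such that J b J* ∈ B and J* b J ∈ B for all b ∈ B (a coefficient algebra for J). Then α(1) = JJ* is a projection in B and the range of α(a) = J a J* on B satisfies {J a J* : a ∈ B} = {JJ*·b·JJ* : b ∈ B}; in particular the range of α restricted to B is the hereditary corner α(1)·B·α(1). -/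
/-!
The relation `J* J = 1` makes `J J*` idempotent and gives
`(J J*) (J b J*) (J J*) = J b J*`, while `J (J* b J) J* = (J J*) b (J J*)` is associativity.
So each of the two maps sends `B` into the range of the other, as `B` is closed under both
conjugations.
-/

section Monoid

variable {M : Type*} [Monoid M] {J K : M}

theorem isIdempotentElem_mul_of_mul_eq_one (h : K * J = 1) : IsIdempotentElem (J * K) := by
  calc J * K * (J * K) = J * (K * J) * K := by simp only [mul_assoc]
    _ = J * K := by rw [h, mul_one]

theorem mul_mul_mul_corner_of_mul_eq_one (h : K * J = 1) (b : M) :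
    J * K * (J * b * K) * (J * K) = J * b * K := by
  calc J * K * (J * b * K) * (J * K) = J * ((K * J) * b * (K * J)) * K := by
        simp only [mul_assoc]
    _ = J * b * K := by rw [h, one_mul, mul_one]

theorem image_conj_eq_image_corner (h : K * J = 1) {S : Set M}
    (hJ : ∀ b ∈ S, J * b * K ∈ S) (hK : ∀ b ∈ S, K * b * J ∈ S) :
    (fun b => J * b * K) '' S = (fun b => J * K * b * (J * K)) '' S := by
  ext x
  constructor
  · rintro ⟨b, hb, rfl⟩
    exact ⟨J * b * K, hJ b hb, mul_mul_mul_corner_of_mul_eq_one h b⟩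
  · rintro ⟨b, hb, rfl⟩
    exact ⟨K * b * J, hK b hb, by simp only [mul_assoc]⟩

end Monoid

theorem statement9_general (A : Type*) [NormedRing A] [StarRing A]
    [NormedAlgebra ℂ A] [StarModule ℂ A]
    (J : A) (hJ : star J * J = 1)
    (B : StarSubalgebra ℂ A)
    (hα : ∀ b ∈ B, J * b * star J ∈ B)
    (hβ : ∀ b ∈ B, star J * b * J ∈ B) :
    J * star J ∈ B ∧
    IsSelfAdjoint (J * star J) ∧
    (J * star J) * (J * star J) = J * star J ∧
    (fun b => J * b * star J) '' (B : Set A)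
      = (fun b => (J * star J) * b * (J * star J)) '' (B : Set A) :=
  ⟨by simpa using hα 1 B.one_mem, IsSelfAdjoint.mul_star_self J,
    isIdempotentElem_mul_of_mul_eq_one hJ, image_conj_eq_image_corner hJ hα hβ⟩

/-- Let `A` be a unital C*-algebra, `J ∈ A` an isometry (`J*J = 1`), and `B` a
closed unital *-subalgebra of `A` which is a coefficient algebra for `J`
(`J b J* ∈ B` and `J* b J ∈ B` for all `b ∈ B`).  Then `α(1) = JJ*` is a
projection in `B`, and the range of `α(a) = J a J*` on `B` is the hereditary
corner `α(1)·B·α(1)`. -/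
theorem statement9 (A : Type*) [NormedRing A] [StarRing A] [CStarRing A]
    [NormedAlgebra ℂ A] [CompleteSpace A] [StarModule ℂ A]
    (J : A) (hJ : star J * J = 1)
    (B : StarSubalgebra ℂ A) (hBclosed : IsClosed (B : Set A))
    (hα : ∀ b ∈ B, J * b * star J ∈ B)
    (hβ : ∀ b ∈ B, star J * b * J ∈ B) :
    J * star J ∈ B ∧
    IsSelfAdjoint (J * star J) ∧
    (J * star J) * (J * star J) = J * star J ∧
    (fun b => J * b * star J) '' (B : Set A)
      = (fun b => (J * star J) * b * (J * star J)) '' (B : Set A) :=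
  statement9_general A J hJ B hα hβ
end

section
/- Let A be a unital C*-algebra, J ∈ A with J*J = 1, and B a unital C*-subalgebra of A with J b J* ∈ B and J* b J ∈ B for all b ∈ B. Let I ⊆ B be a closed two-sided ideal of B with J a J* ∈ I and J* a J ∈ I for all a ∈ I. Let A_J be the smallest closed *-subalgebra of A containing B and J, and let 𝓘_J be the smallest closed *-subalgebra of A containing {a·J^n : a ∈ I, n ∈ ℕ}. Then 𝓘_J is a two-sided ideal in A_J: for all x ∈ A_J and y ∈ 𝓘_J, both x·y ∈ 𝓘_J and y·x ∈ 𝓘_J. -/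
/-!
A closed ideal `I` of a C⋆-subalgebra is self-adjoint: `star a` is the limit of
`star a * f_ε(a * star a)` with `f_ε(t) = t / (ε + t)`, and `f_ε(a * star a) ∈ I`.
The elements of `A` multiplying `𝓘_J` into itself on both sides form a closed ⋆-subalgebra,
so it suffices to multiply `b ∈ B` and `J` (and their adjoints) against the generators
`a * J ^ n`. Using `star J ^ n * J ^ n = 1`, each product is again a generator or the adjoint of
one, e.g. `a * J ^ n * b = a * (J ^ n * b * star J ^ n) * J ^ n` and
`J * a * J ^ n = (J * a * star J) * J ^ (n + 1)`.
-/

open NonUnitalStarAlgebra NonUnitalStarSubalgebra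

theorem elemental_subset_of_isClosed {R A : Type*} [CommSemiring R] [StarRing R]
    [NonUnitalSemiring A] [StarRing A] [Module R A] [IsScalarTower R A A] [SMulCommClass R A A]
    [StarModule R A] [TopologicalSpace A] [IsSemitopologicalSemiring A] [ContinuousConstSMul R A]
    [ContinuousStar A] {S : NonUnitalSubalgebra R A} (hS : IsClosed (S : Set A)) {x : A}
    (hx : IsSelfAdjoint x) (hxS : x ∈ S) : (elemental R x : Set A) ⊆ S := by
  refine closure_minimal (fun y hy ↦ ?_) hS
  change y ∈ NonUnitalAlgebra.adjoin R ({x} ∪ star {x}) at hy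
  rw [Set.star_singleton, hx.star_eq, Set.union_self] at hy
  exact NonUnitalAlgebra.adjoin_le (Set.singleton_subset_iff.2 hxS) hy

section CStarAlgebra

variable {A : Type*} [CStarAlgebra A]

theorem norm_sub_mul_cfc_sq (a : A) (f : ℝ → ℝ)
    (hf : ContinuousOn f (spectrum ℝ (star a * a)) := by cfc_cont_tac) :
    ‖a - a * cfc f (star a * a)‖ ^ 2 =
      ‖cfc (fun t ↦ (1 - f t) * t * (1 - f t)) (star a * a)‖ := by
  set u := cfc f (star a * a)
  have h1u : cfc (fun t ↦ 1 - f t) (star a * a) = 1 - u := by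
    rw [cfc_sub (fun _ ↦ 1) f _ (by fun_prop), cfc_const_one ℝ (star a * a)]
  have hu : IsSelfAdjoint u := cfc_predicate f (star a * a)
  rw [cfc_mul _ _ _ (by fun_prop) (by fun_prop), cfc_mul _ _ _ (by fun_prop) (by fun_prop),
    cfc_id' ℝ (star a * a), h1u, sq, ← CStarRing.norm_star_mul_self, ← mul_one_sub, star_mul,
    star_sub, star_one, hu.star_eq]
  simp only [mul_assoc]

theorem mem_closure_mul_elemental_star_mul_self (a : A) :
    a ∈ closure ((a * ·) '' (elemental ℝ (star a * a) : Set A)) := by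
  set x := star a * a
  have hσ : ∀ t ∈ quasispectrum ℝ x, 0 ≤ t := by
    rw [quasispectrum_eq_spectrum_union_zero]
    rintro t (ht | rfl)
    exacts [spectrum_star_mul_self_nonneg t ht, le_rfl]
  rw [Metric.mem_closure_iff]
  intro δ hδ
  set ε := (δ / 2) ^ 2 with hε_eq
  have hε : 0 < ε := by positivity
  set f : ℝ → ℝ := fun t ↦ t * (ε + t)⁻¹
  have hf : ContinuousOn f (quasispectrum ℝ x) :=
    continuousOn_id.mul <| (continuousOn_const.add continuousOn_id).inv₀ fun t ht ↦
      (add_pos_of_pos_of_nonneg hε (hσ t ht)).ne'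
  have hfσ := hf.mono (spectrum_subset_quasispectrum ℝ x)
  refine ⟨a * cfc f x, ⟨cfc f x, ?_, rfl⟩, ?_⟩
  · rw [← cfcₙ_eq_cfc hf (by simp [f])]
    exact cfcₙ_mem_elemental f x
  have hbound : ‖a - a * cfc f x‖ ^ 2 ≤ ε := by
    rw [norm_sub_mul_cfc_sq a f hfσ]
    refine norm_cfc_le hε.le fun t ht ↦ ?_
    have ht0 : 0 ≤ t := hσ t (spectrum_subset_quasispectrum ℝ x ht)
    have h1f : 1 - f t = ε / (ε + t) := by
      simp only [f]; field_simp; ring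
    rw [h1f, Real.norm_of_nonneg (by positivity), div_mul_eq_mul_div, div_mul_div_comm,
      div_le_iff₀ (by positivity)]
    have : 0 ≤ ε ^ 2 + ε * t + t ^ 2 := by positivity
    nlinarith [mul_nonneg hε.le this]
  rw [dist_eq_norm]
  nlinarith [norm_nonneg (a - a * cfc f x), hε_eq]

end CStarAlgebra

theorem star_mem_of_isClosed_ideal {A : Type*} [CStarAlgebra A] (B : StarSubalgebra ℂ A)
    {I : Set A} (hIB : I ⊆ B) (hIclosed : IsClosed I) (hI0 : (0 : A) ∈ I)
    (hIadd : ∀ a ∈ I, ∀ b ∈ I, a + b ∈ I) (hImull : ∀ b ∈ B, ∀ a ∈ I, b * a ∈ I)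
    (hImulr : ∀ a ∈ I, ∀ b ∈ B, a * b ∈ I) {a : A} (ha : a ∈ I) : star a ∈ I := by
  let S : NonUnitalSubalgebra ℝ A :=
    { carrier := I
      add_mem' := fun hx hy ↦ hIadd _ hx _ hy
      zero_mem' := hI0
      mul_mem' := fun hx hy ↦ hImull _ (hIB hx) _ hy
      smul_mem' := fun r y hy ↦ by
        rw [Algebra.smul_def, IsScalarTower.algebraMap_apply ℝ ℂ A]
        exact hImull _ (B.algebraMap_mem _) y hy }
  have hI : (elemental ℝ (a * star a) : Set A) ⊆ I :=
    elemental_subset_of_isClosed (S := S) hIclosed (.mul_star_self a)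
      (hImulr a ha _ (star_mem (hIB ha)))
  have ha' := mem_closure_mul_elemental_star_mul_self (star a)
  rw [star_star] at ha'
  refine hIclosed.closure_subset_iff.2 ?_ ha'
  rintro _ ⟨u, hu, rfl⟩
  exact hImull _ (star_mem (hIB ha)) u (hI hu)

theorem NonUnitalSubalgebra.mul_mem_and_mem_mul_of_mem_closure_adjoin {R A : Type*}
    [CommSemiring R] [NonUnitalSemiring A] [Module R A] [IsScalarTower R A A]
    [SMulCommClass R A A] [TopologicalSpace A] [IsSemitopologicalSemiring A]
    {K : NonUnitalSubalgebra R A} (hK : IsClosed (K : Set A)) {G : Set A} (hGK : G ⊆ K)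
    {x : A} (hx : ∀ g ∈ G, x * g ∈ K ∧ g * x ∈ K) {y : A}
    (hy : y ∈ closure (NonUnitalAlgebra.adjoin R G : Set A)) :
    x * y ∈ K ∧ y * x ∈ K := by
  let T : NonUnitalSubalgebra R A :=
    { carrier := {y | y ∈ K ∧ x * y ∈ K ∧ y * x ∈ K}
      add_mem' := fun ⟨hy, hxy, hyx⟩ ⟨hz, hxz, hzx⟩ ↦
        ⟨add_mem hy hz, mul_add x _ _ ▸ add_mem hxy hxz, add_mul _ _ x ▸ add_mem hyx hzx⟩
      zero_mem' := by simp
      mul_mem' := fun ⟨hy, hxy, _⟩ ⟨hz, _, hzx⟩ ↦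
        ⟨mul_mem hy hz, mul_assoc x _ _ ▸ mul_mem hxy hz, (mul_assoc _ _ x).symm ▸ mul_mem hy hzx⟩
      smul_mem' := fun r _ ⟨hy, hxy, hyx⟩ ↦
        ⟨SMulMemClass.smul_mem r hy, (mul_smul_comm r x _).symm ▸ SMulMemClass.smul_mem r hxy,
          (smul_mul_assoc r _ x).symm ▸ SMulMemClass.smul_mem r hyx⟩ }
  have hT : IsClosed (T : Set A) :=
    hK.inter ((hK.preimage (continuous_const_mul x)).inter (hK.preimage (continuous_mul_const x)))
  have hGT : G ⊆ T := fun g hg ↦ (⟨hGK hg, hx g hg⟩ : g ∈ K ∧ x * g ∈ K ∧ g * x ∈ K)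
  exact (closure_minimal (NonUnitalAlgebra.adjoin_le hGT) hT hy).2

namespace NonUnitalStarSubalgebra

variable {R A : Type*} [CommSemiring R] [StarRing R] [Semiring A] [StarRing A] [Algebra R A]
  [StarModule R A]

def idealizer (K : NonUnitalStarSubalgebra R A) : StarSubalgebra R A where
  carrier := {x | ∀ y ∈ K, x * y ∈ K ∧ y * x ∈ K}
  mul_mem' {x x'} hx hx' y hy :=
    ⟨mul_assoc x x' y ▸ (hx _ (hx' y hy).1).1, (mul_assoc y x x').symm ▸ (hx' _ (hx y hy).2).2⟩
  one_mem' y hy := by simpa using hy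
  add_mem' {x x'} hx hx' y hy :=
    ⟨(add_mul x x' y).symm ▸ add_mem (hx y hy).1 (hx' y hy).1,
      (mul_add y x x').symm ▸ add_mem (hx y hy).2 (hx' y hy).2⟩
  zero_mem' y hy := by simp
  algebraMap_mem' r y hy := by
    rw [← Algebra.commutes, ← Algebra.smul_def, and_self]
    exact SMulMemClass.smul_mem r hy
  star_mem' {x} hx y hy := by
    obtain ⟨h₁, h₂⟩ := hx (star y) (star_mem hy)
    exact ⟨by simpa using star_mem h₂, by simpa using star_mem h₁⟩

theorem mem_idealizer {K : NonUnitalStarSubalgebra R A} {x : A} :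
    x ∈ K.idealizer ↔ ∀ y ∈ K, x * y ∈ K ∧ y * x ∈ K :=
  Iff.rfl

theorem isClosed_idealizer [TopologicalSpace A] [IsSemitopologicalSemiring A]
    {K : NonUnitalStarSubalgebra R A} (hK : IsClosed (K : Set A)) :
    IsClosed (K.idealizer : Set A) := by
  have : (K.idealizer : Set A) = ⋂ y ∈ K, (· * y) ⁻¹' K ∩ (y * ·) ⁻¹' K := by
    ext x
    simp [mem_idealizer]
  rw [this]
  exact isClosed_biInter fun y _ ↦
    (hK.preimage (continuous_mul_const y)).inter (hK.preimage (continuous_const_mul y))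

variable [TopologicalSpace A] [IsSemitopologicalSemiring A] [ContinuousConstSMul R A]
  [ContinuousStar A]

theorem mem_idealizer_topologicalClosure_adjoin {S : Set A} {x : A}
    (hx : ∀ s ∈ S, x * s ∈ (adjoin R S).topologicalClosure ∧
      s * x ∈ (adjoin R S).topologicalClosure)
    (hx' : ∀ s ∈ S, star x * s ∈ (adjoin R S).topologicalClosure ∧
      s * star x ∈ (adjoin R S).topologicalClosure) :
    x ∈ (adjoin R S).topologicalClosure.idealizer := by
  refine fun y hy ↦ NonUnitalSubalgebra.mul_mem_and_mem_mul_of_mem_closure_adjoin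
    (K := (adjoin R S).topologicalClosure.toNonUnitalSubalgebra) (isClosed_topologicalClosure _)
    (G := S ∪ star S) ?_ ?_ hy
  · exact Set.union_subset ((subset_adjoin R S).trans (le_topologicalClosure _))
      ((star_subset_adjoin R S).trans (le_topologicalClosure _))
  rintro g (hg | hg)
  · exact hx g hg
  · obtain ⟨h₁, h₂⟩ := hx' (star g) hg
    exact ⟨by simpa using star_mem h₂, by simpa using star_mem h₁⟩

end NonUnitalStarSubalgebra

section IsometryGenerators

variable {A : Type*} [Ring A] [StarRing A] {B I K : Set A} {J : A}

theorem pow_mul_mul_star_pow_mem (hBα : ∀ b ∈ B, J * b * star J ∈ B) (n : ℕ) {b : A}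
    (hb : b ∈ B) : J ^ n * b * star J ^ n ∈ B := by
  induction n generalizing b with
  | zero => simpa using hb
  | succ n ih =>
    convert ih (hBα b hb) using 1
    simp only [pow_succ J, pow_succ' (star J), mul_assoc]

theorem mul_pow_mem_of_mem_coefficient (hJ : star J * J = 1)
    (hBα : ∀ b ∈ B, J * b * star J ∈ B) (hImull : ∀ b ∈ B, ∀ a ∈ I, b * a ∈ I)
    (hImulr : ∀ a ∈ I, ∀ b ∈ B, a * b ∈ I) (hK : ∀ a ∈ I, ∀ n : ℕ, a * J ^ n ∈ K) {b a : A}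
    (hb : b ∈ B) (ha : a ∈ I) (n : ℕ) : b * (a * J ^ n) ∈ K ∧ a * J ^ n * b ∈ K := by
  refine ⟨mul_assoc b a _ ▸ hK _ (hImull b hb a ha) n, ?_⟩
  convert hK _ (hImulr a ha _ (pow_mul_mul_star_pow_mem hBα n hb)) n using 1
  simp only [mul_assoc, pow_mul_pow_eq_one n hJ, mul_one]

theorem isometry_mul_pow_mem (hJ : star J * J = 1) (hIα : ∀ a ∈ I, J * a * star J ∈ I)
    (hK : ∀ a ∈ I, ∀ n : ℕ, a * J ^ n ∈ K) {a : A} (ha : a ∈ I) (n : ℕ) :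
    J * (a * J ^ n) ∈ K ∧ a * J ^ n * J ∈ K := by
  refine ⟨?_, (mul_assoc a _ J).symm ▸ (pow_succ J n) ▸ hK a ha (n + 1)⟩
  convert hK _ (hIα a ha) (n + 1) using 1
  rw [pow_succ', mul_assoc (J * a), ← mul_assoc (star J), hJ, one_mul, mul_assoc]

theorem star_isometry_mul_pow_mem (hJ : star J * J = 1) (h1B : (1 : A) ∈ B)
    (hBα : ∀ b ∈ B, J * b * star J ∈ B) (hImulr : ∀ a ∈ I, ∀ b ∈ B, a * b ∈ I)
    (hIstar : ∀ a ∈ I, star a ∈ I) (hIα : ∀ a ∈ I, J * a * star J ∈ I)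
    (hIβ : ∀ a ∈ I, star J * a * J ∈ I) (hK : ∀ a ∈ I, ∀ n : ℕ, a * J ^ n ∈ K)
    (hKstar : ∀ z ∈ K, star z ∈ K) {a : A} (ha : a ∈ I) (n : ℕ) :
    star J * (a * J ^ n) ∈ K ∧ a * J ^ n * star J ∈ K := by
  cases n with
  | zero =>
    constructor
    · simpa using hKstar _ (hK _ (hIstar a ha) 1)
    · convert hKstar _ (hK _ (hIα _ (hIstar a ha)) 1) using 1
      simp [mul_assoc, hJ]
  | succ n =>
    constructor
    · convert hK _ (hIβ a ha) n using 1
      simp only [pow_succ', mul_assoc]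
    · have hP := pow_mul_mul_star_pow_mem hBα (n + 1) h1B
      rw [mul_one] at hP
      convert hK _ (hImulr a ha _ hP) n using 1
      simp only [pow_succ' (star J), mul_assoc, pow_mul_pow_eq_one n hJ, mul_one]

end IsometryGenerators

theorem statement10_general (A : Type*) [NormedRing A] [StarRing A] [CStarRing A]
    [NormedAlgebra ℂ A] [CompleteSpace A] [StarModule ℂ A]
    (J : A) (hJ : star J * J = 1)
    (B : StarSubalgebra ℂ A)
    (hBα : ∀ b ∈ B, J * b * star J ∈ B)
    (I : Set A) (hIB : I ⊆ (B : Set A)) (hIclosed : IsClosed I)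
    (hI0 : (0 : A) ∈ I)
    (hIadd : ∀ a ∈ I, ∀ b ∈ I, a + b ∈ I)
    (hImull : ∀ b ∈ B, ∀ a ∈ I, b * a ∈ I)
    (hImulr : ∀ a ∈ I, ∀ b ∈ B, a * b ∈ I)
    (hIα : ∀ a ∈ I, J * a * star J ∈ I)
    (hIβ : ∀ a ∈ I, star J * a * J ∈ I) :
    ∀ x ∈ (StarAlgebra.adjoin ℂ ((B : Set A) ∪ {J})).topologicalClosure,
      ∀ y ∈ (NonUnitalStarAlgebra.adjoin ℂ
          {z : A | ∃ a ∈ I, ∃ n : ℕ, z = a * J ^ n}).topologicalClosure,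
        x * y ∈ (NonUnitalStarAlgebra.adjoin ℂ
            {z : A | ∃ a ∈ I, ∃ n : ℕ, z = a * J ^ n}).topologicalClosure ∧
        y * x ∈ (NonUnitalStarAlgebra.adjoin ℂ
            {z : A | ∃ a ∈ I, ∃ n : ℕ, z = a * J ^ n}).topologicalClosure := by
  let : CStarAlgebra A := { ‹NormedRing A›, ‹StarRing A›, ‹CStarRing A›, ‹NormedAlgebra ℂ A›,
    ‹CompleteSpace A›, ‹StarModule ℂ A› with }
  have hIstar : ∀ a ∈ I, star a ∈ I := fun a ha ↦
    star_mem_of_isClosed_ideal B hIB hIclosed hI0 hIadd hImull hImulr ha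
  set K := (adjoin ℂ {z : A | ∃ a ∈ I, ∃ n : ℕ, z = a * J ^ n}).topologicalClosure
  have hK : ∀ a ∈ I, ∀ n : ℕ, a * J ^ n ∈ K := fun a ha n ↦
    le_topologicalClosure _ (subset_adjoin ℂ _ ⟨a, ha, n, rfl⟩)
  have hAJ : (StarAlgebra.adjoin ℂ ((B : Set A) ∪ {J})).topologicalClosure ≤ K.idealizer := by
    refine StarSubalgebra.topologicalClosure_minimal (StarAlgebra.adjoin_le ?_)
      (isClosed_idealizer (isClosed_topologicalClosure _))
    rintro x (hx | rfl) <;> refine mem_idealizer_topologicalClosure_adjoin ?_ ?_ <;>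
      rintro _ ⟨a, ha, n, rfl⟩
    · exact mul_pow_mem_of_mem_coefficient hJ hBα hImull hImulr hK hx ha n
    · exact mul_pow_mem_of_mem_coefficient hJ hBα hImull hImulr hK (star_mem hx) ha n
    · exact isometry_mul_pow_mem hJ hIα hK ha n
    · exact star_isometry_mul_pow_mem hJ B.one_mem hBα hImulr hIstar hIα hIβ hK
        (fun _ ↦ star_mem) ha n
  exact fun x hx y hy ↦ hAJ hx y hy

/-- Let `A` be a unital C*-algebra, `J ∈ A` an isometry (`J*J = 1`), and `B` a closed
unital *-subalgebra of `A` which is a coefficient algebra for `J`.  Let `I ⊆ B` be a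
closed two-sided ideal of `B` which is invariant (`J a J* ∈ I` and `J* a J ∈ I` for
`a ∈ I`).  Let `A_J` be the smallest closed *-subalgebra of `A` containing `B` and `J`,
and `𝓘_J` the smallest closed *-subalgebra of `A` containing `{a·J^n : a ∈ I, n ∈ ℕ}`.
Then `𝓘_J` is a two-sided ideal in `A_J`. -/
theorem statement10 (A : Type*) [NormedRing A] [StarRing A] [CStarRing A]
    [NormedAlgebra ℂ A] [CompleteSpace A] [StarModule ℂ A]
    (J : A) (hJ : star J * J = 1)
    (B : StarSubalgebra ℂ A) (hBclosed : IsClosed (B : Set A))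
    (hBα : ∀ b ∈ B, J * b * star J ∈ B)
    (hBβ : ∀ b ∈ B, star J * b * J ∈ B)
    (I : Set A) (hIB : I ⊆ (B : Set A)) (hIclosed : IsClosed I)
    (hI0 : (0 : A) ∈ I)
    (hIadd : ∀ a ∈ I, ∀ b ∈ I, a + b ∈ I)
    (hIneg : ∀ a ∈ I, -a ∈ I)
    (hImull : ∀ b ∈ B, ∀ a ∈ I, b * a ∈ I)
    (hImulr : ∀ a ∈ I, ∀ b ∈ B, a * b ∈ I)
    (hIα : ∀ a ∈ I, J * a * star J ∈ I)
    (hIβ : ∀ a ∈ I, star J * a * J ∈ I) :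
    ∀ x ∈ (StarAlgebra.adjoin ℂ ((B : Set A) ∪ {J})).topologicalClosure,
      ∀ y ∈ (NonUnitalStarAlgebra.adjoin ℂ
          {z : A | ∃ a ∈ I, ∃ n : ℕ, z = a * J ^ n}).topologicalClosure,
        x * y ∈ (NonUnitalStarAlgebra.adjoin ℂ
            {z : A | ∃ a ∈ I, ∃ n : ℕ, z = a * J ^ n}).topologicalClosure ∧
        y * x ∈ (NonUnitalStarAlgebra.adjoin ℂ
            {z : A | ∃ a ∈ I, ∃ n : ℕ, z = a * J ^ n}).topologicalClosure :=
  statement10_general A J hJ B hBα I hIB hIclosed hI0 hIadd hImull hImulr hIα hIβ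
end

section
/- For every bounded function g : ℕ → ℂ the following relations hold for the Hensel shift: (i) V M_g = M_{g_a} V and M_g V = V M_{g_b}, where g_a(x) := g(x/s) if s divides x and g_a(x) := 0 otherwise, and g_b(x) := g(s·x); (ii) V* M_g V = M_{g_b}; (iii) V M_g V* = M_{g_a}·(I − P_{(0,0)}), where P_{(0,0)} is the orthogonal projection onto ℂ·E_{(0,0)}. -/
/- Fix an integer `s ≥ 2`.  `Vtx s = Σ n, Fin (s^n)`, `Hsp s = ℓ²(Vtx s, ℂ)` with
canonical orthonormal basis `Evec s v = lp.single 2 v 1`.  For bounded `g : ℕ → ℂ`,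
`M_g` is the diagonal operator `M_g E_{(n,x)} = g(x)·E_{(n,x)}`.  The projection
`P₍₀,₀₎` onto `ℂ·E_{(0,0)}` fixes `E_{(0,0)}` and kills the other basis vectors
(note `v.1 = 0` forces `v = (0,0)` since `Fin (s^0)` is a singleton). -/

noncomputable section

open scoped InnerProductSpace ComplexConjugate

lemma vtx_eq_iff {s : ℕ} (v w : Vtx s) : v = w ↔ v.1 = w.1 ∧ (v.2 : ℕ) = (w.2 : ℕ) := by
  constructor
  · rintro rfl; exact ⟨rfl, rfl⟩
  · obtain ⟨n, x⟩ := v; obtain ⟨m, y⟩ := w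
    rintro ⟨h1, h2⟩
    dsimp at h1 h2
    subst h1
    exact congrArg _ (Fin.ext h2)

lemma inner_evec {s : ℕ} (v : Vtx s) (u : Hsp s) : ⟪Evec s v, u⟫_ℂ = u v := by
  rw [Evec, lp.inner_single_left]
  simp [RCLike.inner_apply]

lemma evec_ext {s : ℕ} {u t : Hsp s}
    (h : ∀ v, ⟪Evec s v, u⟫_ℂ = ⟪Evec s v, t⟫_ℂ) : u = t := by
  apply lp.ext
  funext v
  have := h v
  rwa [inner_evec, inner_evec] at this

lemma inner_evec_evec {s : ℕ} (v w : Vtx s) :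
    ⟪Evec s v, Evec s w⟫_ℂ = if w = v then 1 else 0 := by
  rcases eq_or_ne w v with h | h
  · subst h; rw [inner_evec, if_pos rfl]; exact lp.single_apply_self 2 w 1
  · rw [inner_evec, if_neg h]; exact lp.single_apply_ne 2 w 1 (Ne.symm h)

lemma dense_span_evec (s : ℕ) :
    Dense ((Submodule.span ℂ (Set.range (Evec s)) : Submodule ℂ (Hsp s)) : Set (Hsp s)) := by
  rw [Submodule.dense_iff_topologicalClosure_eq_top, eq_top_iff]
  rintro f -
  have hsum : HasSum (fun v => lp.single 2 v (f v)) f := lp.hasSum_single ENNReal.ofNat_ne_top f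
  refine mem_closure_of_tendsto hsum (Filter.Eventually.of_forall fun t => ?_)
  simp only [SetLike.mem_coe]
  refine Submodule.sum_mem _ fun v _ => ?_
  have h1 : lp.single 2 v (f v) = (f v) • Evec s v := by
    rw [Evec, ← lp.single_smul, smul_eq_mul, mul_one]
  rw [h1]
  exact Submodule.smul_mem _ _ (Submodule.subset_span ⟨v, rfl⟩)

lemma clm_ext_evec {s : ℕ} {A B : Hsp s →L[ℂ] Hsp s}
    (h : ∀ v : Vtx s, A (Evec s v) = B (Evec s v)) : A = B :=
  ContinuousLinearMap.ext_on (dense_span_evec s) (by rintro _ ⟨v, rfl⟩; exact h v)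

/-- For every bounded `g : ℕ → ℂ` the Hensel shift `V` satisfies
(i) `V M_g = M_{g_a} V` and `M_g V = V M_{g_b}`, where `g_a(x) = g(x/s)` if `s ∣ x`
and `0` otherwise, and `g_b(x) = g(s·x)`; (ii) `V* M_g V = M_{g_b}`;
(iii) `V M_g V* = M_{g_a}·(I − P_{(0,0)})`. -/
theorem statement13 (s : ℕ) (hs : 2 ≤ s) (V : Hsp s →L[ℂ] Hsp s)
    (hV : ∀ (n : ℕ) (x : Fin (s ^ n)), V (Evec s ⟨n, x⟩) = Evec s ⟨n + 1, idxV s n hs x⟩)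
    (g : ℕ → ℂ) (hg : ∃ C : ℝ, ∀ x : ℕ, ‖g x‖ ≤ C)
    (Mg Mga Mgb P : Hsp s →L[ℂ] Hsp s)
    (hMg : ∀ (n : ℕ) (x : Fin (s ^ n)), Mg (Evec s ⟨n, x⟩) = g (x : ℕ) • Evec s ⟨n, x⟩)
    (hMga : ∀ (n : ℕ) (x : Fin (s ^ n)),
      Mga (Evec s ⟨n, x⟩)
        = (if s ∣ (x : ℕ) then g ((x : ℕ) / s) else 0) • Evec s ⟨n, x⟩)
    (hMgb : ∀ (n : ℕ) (x : Fin (s ^ n)),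
      Mgb (Evec s ⟨n, x⟩) = g (s * (x : ℕ)) • Evec s ⟨n, x⟩)
    (hP : ∀ v : Vtx s, P (Evec s v) = if v.1 = 0 then Evec s v else 0) :
    V * Mg = Mga * V ∧
    Mg * V = V * Mgb ∧
    ContinuousLinearMap.adjoint V * Mg * V = Mgb ∧
    V * Mg * ContinuousLinearMap.adjoint V = Mga * (1 - P) := by
  have hspos : 0 < s := by omega
  have key : ∀ (m : ℕ) (y : Fin (s ^ m)) (v : Vtx s),
      ⟪Evec s ⟨m, y⟩, ContinuousLinearMap.adjoint V (Evec s v)⟫_ℂ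
        = if v = ⟨m + 1, idxV s m hs y⟩ then 1 else 0 := by
    intro m y v
    rw [ContinuousLinearMap.adjoint_inner_right, hV, inner_evec_evec]
  have hA : ∀ (n : ℕ) (x : Fin (s ^ n)),
      ContinuousLinearMap.adjoint V (Evec s ⟨n + 1, idxV s n hs x⟩) = Evec s ⟨n, x⟩ := by
    intro n x
    apply evec_ext; rintro ⟨m, y⟩
    rw [key, inner_evec_evec]
    refine if_congr ?_ rfl rfl
    rw [vtx_eq_iff, vtx_eq_iff]
    dsimp only [idxV]
    constructor
    · rintro ⟨h1, h2⟩
      refine ⟨by omega, ?_⟩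
      have : s * (x : ℕ) = s * (y : ℕ) := h2
      exact Nat.eq_of_mul_eq_mul_left hspos this
    · rintro ⟨h1, h2⟩
      exact ⟨by omega, by show s * (x : ℕ) = s * (y : ℕ); rw [h2]⟩
  have hB : ∀ x : Fin (s ^ 0), ContinuousLinearMap.adjoint V (Evec s ⟨0, x⟩) = 0 := by
    intro x
    apply evec_ext; rintro ⟨m, y⟩
    rw [key, inner_zero_right, if_neg]
    intro hcon
    exact (Nat.succ_ne_zero m) (congrArg Sigma.fst hcon).symm
  have hC : ∀ (n : ℕ) (x : Fin (s ^ (n + 1))), ¬ s ∣ (x : ℕ) →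
      ContinuousLinearMap.adjoint V (Evec s ⟨n + 1, x⟩) = 0 := by
    intro n x hx
    apply evec_ext; rintro ⟨m, y⟩
    rw [key, inner_zero_right, if_neg]
    intro hcon
    rw [vtx_eq_iff] at hcon
    refine hx ?_
    have h2 : (x : ℕ) = s * (y : ℕ) := hcon.2
    rw [h2]
    exact dvd_mul_right s (y : ℕ)
  refine ⟨clm_ext_evec ?_, clm_ext_evec ?_, clm_ext_evec ?_, clm_ext_evec ?_⟩
  · rintro ⟨n, x⟩
    simp only [ContinuousLinearMap.mul_apply, hMg, map_smul, hV, hMga]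
    congr 1
    have h1 : ((idxV s n hs x : ℕ)) = s * (x : ℕ) := rfl
    rw [h1, if_pos (dvd_mul_right s _), Nat.mul_div_cancel_left _ hspos]
  · rintro ⟨n, x⟩
    simp only [ContinuousLinearMap.mul_apply, hMgb, map_smul, hV, hMg]
    rfl
  · rintro ⟨n, x⟩
    simp only [ContinuousLinearMap.mul_apply, hV, hMg, map_smul, hA, hMgb]
    rfl
  · rintro ⟨n, x⟩
    have hrhs : (Mga * (1 - P)) (Evec s ⟨n, x⟩)
        = Mga (Evec s ⟨n, x⟩ - P (Evec s ⟨n, x⟩)) := by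
      simp [ContinuousLinearMap.mul_apply, ContinuousLinearMap.sub_apply]
    match n, x with
    | 0, x =>
      rw [hrhs, hP, if_pos rfl, sub_self, map_zero]
      simp only [ContinuousLinearMap.mul_apply, hB, map_zero]
    | (m + 1), x =>
      rw [hrhs, hP, if_neg (Nat.succ_ne_zero m), sub_zero, hMga]
      by_cases hd : s ∣ (x : ℕ)
      · have hxlt : (x : ℕ) / s < s ^ m := by
          rw [Nat.div_lt_iff_lt_mul hspos]
          have h1 := x.2
          have h2 : s ^ (m + 1) = s ^ m * s := pow_succ s m
          omega
        set x' : Fin (s ^ m) := ⟨(x : ℕ) / s, hxlt⟩ with hx'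
        have hvx : (⟨m + 1, x⟩ : Vtx s) = ⟨m + 1, idxV s m hs x'⟩ := by
          refine (vtx_eq_iff _ _).2 ⟨rfl, ?_⟩
          show (x : ℕ) = s * ((x : ℕ) / s)
          exact (Nat.mul_div_cancel' hd).symm
        rw [if_pos hd]
        calc (V * Mg * ContinuousLinearMap.adjoint V) (Evec s ⟨m + 1, x⟩)
            = V (Mg (ContinuousLinearMap.adjoint V (Evec s ⟨m + 1, idxV s m hs x'⟩))) := by
              rw [← hvx]; rfl
          _ = V (Mg (Evec s ⟨m, x'⟩)) := by rw [hA]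
          _ = g ((x : ℕ) / s) • Evec s ⟨m + 1, idxV s m hs x'⟩ := by
              rw [hMg, map_smul, hV]
          _ = g ((x : ℕ) / s) • Evec s ⟨m + 1, x⟩ := by rw [← hvx]
      · rw [if_neg hd, zero_smul]
        simp only [ContinuousLinearMap.mul_apply, hC m x hd, map_zero]
end
end

section
/- For every bounded function g : ℕ → ℂ, the Bernoulli shift satisfies S M_g = M_{g_S} S, where g_S(x) := g((x − (x mod s))/s) = g(⌊x/s⌋). -/
noncomputable section

/-! Both sides are continuous, so it suffices to compare them on the basis vectors `E_{(n,x)}`.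
The shift sends `E_{(n,x)}` to an average of the children `E_{(n+1, s·x+j)}`, and every child
`s·x+j` has parent `⌊(s·x+j)/s⌋ = x`; hence multiplying by `g` before the shift or by `g_S` after it
gives the same vector. -/

theorem Hsp.ext_evec {s : ℕ} {F : Type*} [AddCommMonoid F] [Module ℂ F] [TopologicalSpace F]
    [T2Space F] {A B : Hsp s →L[ℂ] F} (h : ∀ v, A (Evec s v) = B (Evec s v)) : A = B :=
  lp.ext_continuousLinearMap ENNReal.ofNat_ne_top fun v =>
    ContinuousLinearMap.ext_ring <| by
      simpa only [ContinuousLinearMap.comp_apply, lp.singleContinuousLinearMap_apply, Evec] using h v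

theorem idxS_sub_mod_div {s n : ℕ} (x : Fin (s ^ n)) (j : Fin s) :
    ((idxS s n x j : ℕ) - (idxS s n x j : ℕ) % s) / s = x := by
  rw [← Nat.div_eq_sub_mod_div]
  change (s * (x : ℕ) + j) / s = x
  rw [Nat.mul_add_div j.pos, Nat.div_eq_of_lt j.isLt, add_zero]

theorem statement16_general (s : ℕ) (S : Hsp s →L[ℂ] Hsp s)
    (hS : ∀ (n : ℕ) (x : Fin (s ^ n)),
      S (Evec s ⟨n, x⟩) = (1 / (s : ℂ)) • ∑ j : Fin s, Evec s ⟨n + 1, idxS s n x j⟩)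
    (g : ℕ → ℂ)
    (Mg MgS : Hsp s →L[ℂ] Hsp s)
    (hMg : ∀ (n : ℕ) (x : Fin (s ^ n)), Mg (Evec s ⟨n, x⟩) = g (x : ℕ) • Evec s ⟨n, x⟩)
    (hMgS : ∀ (n : ℕ) (x : Fin (s ^ n)),
      MgS (Evec s ⟨n, x⟩) = g (((x : ℕ) - (x : ℕ) % s) / s) • Evec s ⟨n, x⟩) :
    S * Mg = MgS * S := by
  refine Hsp.ext_evec ?_
  rintro ⟨n, x⟩
  simp only [mul_apply_eq_comp, hMg, map_smul, hS, hMgS, map_sum, Finset.smul_sum,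
    idxS_sub_mod_div]
  exact Finset.sum_congr rfl fun j _ => smul_comm _ _ _

/-- For every bounded `g : ℕ → ℂ`, the Bernoulli shift
`S E_{(n,x)} = (1/s)·Σ_{j=0}^{s-1} E_{(n+1, s·x+j)}` satisfies `S M_g = M_{g_S} S`,
where `g_S(x) = g((x − (x mod s))/s) = g(⌊x/s⌋)`. -/
theorem statement16 (s : ℕ) (hs : 2 ≤ s) (S : Hsp s →L[ℂ] Hsp s)
    (hS : ∀ (n : ℕ) (x : Fin (s ^ n)),
      S (Evec s ⟨n, x⟩) = (1 / (s : ℂ)) • ∑ j : Fin s, Evec s ⟨n + 1, idxS s n x j⟩)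
    (g : ℕ → ℂ) (hg : ∃ C : ℝ, ∀ x : ℕ, ‖g x‖ ≤ C)
    (Mg MgS : Hsp s →L[ℂ] Hsp s)
    (hMg : ∀ (n : ℕ) (x : Fin (s ^ n)), Mg (Evec s ⟨n, x⟩) = g (x : ℕ) • Evec s ⟨n, x⟩)
    (hMgS : ∀ (n : ℕ) (x : Fin (s ^ n)),
      MgS (Evec s ⟨n, x⟩) = g (((x : ℕ) - (x : ℕ) % s) / s) • Evec s ⟨n, x⟩) :
    S * Mg = MgS * S :=
  statement16_general s S hS g Mg MgS hMg hMgS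

end
end

section
/- Let f : X → ℂ be continuous, where X = ∏_{n∈ℕ} ZMod s carries the product topology. Then the diagonal operator M_f on H determined by M_f E_{(n,x)} = f(ι(x))·E_{(n,x)} is bounded and satisfies ‖M_f‖ = sup_{y ∈ X} |f(y)|; in particular, the map f ↦ M_f is an isometric (hence faithful) representation of C(X) on H. -/
/- Fix an integer `s ≥ 2`.  `Vtx s = Σ n, Fin (s^n)`, `Hsp s = ℓ²(Vtx s, ℂ)` with
canonical orthonormal basis `Evec s v = lp.single 2 v 1`.  The space
`X = ∏_{n∈ℕ} ZMod s`, with each factor discrete and the product (Tychonoff)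
topology, models the `s`-adic integers `ℤ_s`, and `ι : ℕ → X` is the base-`s`
digit embedding `ι(x)(n) = (x / s^n) mod s`. -/

noncomputable section

instance (s : ℕ) : TopologicalSpace (ZMod s) := ⊥

instance (s : ℕ) : DiscreteTopology (ZMod s) := ⟨rfl⟩

/-- The base-`s` digit embedding `ι : ℕ → ∏_{n∈ℕ} ZMod s`. -/
def iota (s : ℕ) (x : ℕ) : ℕ → ZMod s := fun n => (((x / s ^ n) % s : ℕ) : ZMod s)

/- The operator `M` is diagonal in the canonical basis of `ℓ²`, with symbol `v ↦ f (ι v)`, so its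
norm is the supremum of `|f|` over the range of `ι`. That range is dense in `∏ ZMod s`, since
every finite digit string is the string of leading digits of some natural number; by continuity
the supremum over the range equals the supremum over all of `∏ ZMod s`. -/

namespace lp

variable {ι 𝕜 : Type*} [RCLike 𝕜] [DecidableEq ι] {p : ENNReal} [Fact (1 ≤ p)]
  {M : lp (fun _ : ι => 𝕜) p →L[𝕜] lp (fun _ : ι => 𝕜) p} {g : ι → 𝕜}

theorem apply_of_diagonal (hp : p ≠ ⊤) (hM : ∀ i, M (lp.single p i 1) = g i • lp.single p i 1)
    (h : lp (fun _ : ι => 𝕜) p) (j : ι) : M h j = g j * h j := by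
  have hterm : ∀ i, M (lp.single p i (h i)) j = if i = j then g j * h j else 0 := by
    intro i
    rw [← mul_one (h i), ← smul_eq_mul, lp.single_smul, map_smul, hM]
    by_cases hij : i = j
    · subst hij; simp [mul_comm]
    · simp [hij]
  have hsum : HasSum (fun i => M (lp.single p i (h i)) j) (M h j) :=
    (lp.hasSum_single hp h).mapL ((lp.evalCLM 𝕜 (fun _ : ι => 𝕜) p j).comp M)
  simp only [hterm] at hsum
  exact hsum.unique (hasSum_ite_eq j _)

theorem norm_apply_single_le (hM : ∀ i, M (lp.single p i 1) = g i • lp.single p i 1) (i : ι) :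
    ‖g i‖ ≤ ‖M‖ := by
  have hp : 0 < p := zero_lt_one.trans_le Fact.out
  simpa [hM, norm_smul, lp.norm_single hp] using M.le_opNorm (lp.single p i 1)

theorem opNorm_le_of_diagonal (hp : p ≠ ⊤)
    (hM : ∀ i, M (lp.single p i 1) = g i • lp.single p i 1)
    {C : ℝ} (hC : 0 ≤ C) (hg : ∀ i, ‖g i‖ ≤ C) : ‖M‖ ≤ C := by
  have hp0 : p ≠ 0 := (zero_lt_one.trans_le Fact.out).ne'
  refine M.opNorm_le_bound hC fun h => ?_
  calc ‖M h‖ ≤ ‖(C : 𝕜) • h‖ := lp.norm_mono hp0 fun j => by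
        rw [apply_of_diagonal hp hM, lp.coeFn_smul, Pi.smul_apply, norm_smul, norm_mul,
          RCLike.norm_ofReal, abs_of_nonneg hC]
        exact mul_le_mul_of_nonneg_right (hg j) (norm_nonneg _)
    _ = C * ‖h‖ := by rw [norm_smul, RCLike.norm_ofReal, abs_of_nonneg hC]

end lp

theorem iota_finFunctionFinEquiv {s N : ℕ} (d : Fin N → Fin s) (n : Fin N) :
    iota s (finFunctionFinEquiv d) n = (d n : ℕ) := by
  rw [iota, ← finFunctionFinEquiv_symm_apply_val, Equiv.symm_apply_apply]

theorem denseRange_iota (s : ℕ) [NeZero s] : DenseRange (iota s) := by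
  intro y
  let digits (N : ℕ) : Fin N → Fin s := fun n => ⟨(y n).val, ZMod.val_lt _⟩
  refine mem_closure_of_tendsto (b := Filter.atTop)
    (f := fun N => iota s (finFunctionFinEquiv (digits N))) ?_
    (Filter.Eventually.of_forall fun N => Set.mem_range_self _)
  refine tendsto_pi_nhds.2 fun n => tendsto_const_nhds.congr' ?_
  filter_upwards [Filter.eventually_gt_atTop n] with N hN
  rw [iota_finFunctionFinEquiv (digits N) ⟨n, hN⟩, ZMod.natCast_zmod_val]

/-- For continuous `f : ∏_{n∈ℕ} ZMod s → ℂ`, the diagonal operator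
`M_f E_{(n,x)} = f(ι(x))·E_{(n,x)}` satisfies `‖M_f‖ = sup_{y} |f(y)|`; thus
`f ↦ M_f` is an isometric (hence faithful) representation of `C(ℤ_s)`. -/
theorem statement19 (s : ℕ) (hs : 2 ≤ s)
    (f : (ℕ → ZMod s) → ℂ) (hf : Continuous f)
    (M : Hsp s →L[ℂ] Hsp s)
    (hM : ∀ (n : ℕ) (x : Fin (s ^ n)),
      M (Evec s ⟨n, x⟩) = f (iota s (x : ℕ)) • Evec s ⟨n, x⟩) :
    ‖M‖ = ⨆ y : ℕ → ZMod s, ‖f y‖ := by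
  have : NeZero s := ⟨by omega⟩
  have hdiag : ∀ v : Vtx s, M (lp.single 2 v 1) = f (iota s v.2) • lp.single 2 v 1 :=
    fun ⟨n, x⟩ => hM n x
  have hf_le : ∀ y, ‖f y‖ ≤ ‖M‖ := fun y =>
    (denseRange_iota s).induction_on y (isClosed_le hf.norm continuous_const)
      fun x => lp.norm_apply_single_le hdiag ⟨x, x, Nat.lt_pow_self (by omega)⟩
  have hbdd : BddAbove (Set.range fun y => ‖f y‖) := ⟨‖M‖, Set.forall_mem_range.2 hf_le⟩
  refine le_antisymm ?_ (ciSup_le hf_le)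
  exact lp.opNorm_le_of_diagonal ENNReal.ofNat_ne_top hdiag
    ((norm_nonneg _).trans (le_ciSup hbdd 0)) fun v => le_ciSup hbdd _
end
end
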